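/- arXiv:2402.08362 — 3 statements merged into one kernel-verified Lean document; each statement's English description precedes it below -/
import Mathlib

section
/- Let ψ be a 4×4 complex matrix with ψ†ψ = I₄ (ψ unitary) and det ψ = 1, and let (j₁,j₂,j₃,j₄) be an even permutation of (1,2,3,4). Then the j₄-th column of ψ equals 𝒢[conj(u_{j₁}), conj(u_{j₂}), conj(u_{j₃})], where u_j denotes the j-th column of ψ and conj denotes entrywise complex conjugation. -/
open scoped BigOperators Matrix

/-- The generalized cross product on `ℂ⁴`:
`𝒢[u₁,u₂,u₃] = ∑ j, det(u₁,u₂,u₃,eⱼ) • eⱼ`, where the determinant is that of the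
`4×4` matrix whose columns are `u₁,u₂,u₃,eⱼ`. -/
noncomputable def crossG (u v w : Fin 4 → ℂ) : Fin 4 → ℂ :=
  ∑ j : Fin 4,
    (Matrix.of fun i k : Fin 4 =>
      ![u, v, w, (Pi.single j 1 : Fin 4 → ℂ)] k i).det • (Pi.single j 1 : Fin 4 → ℂ)

/-!
Permute the columns of `ψ` by `p` to get `C`, again unitary and, since `p` is even, of
determinant `1`. The rows of `Cᴴ` are the conjugated columns `ū_{p k}`, and the `i`-th entry of
`𝒢[ū_{p 0}, ū_{p 1}, ū_{p 2}]` is `det Cᴴ` with its last row replaced by `eᵢ`, i.e. the cofactor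
`adj(Cᴴ) i 3`. For a unitary matrix of determinant `1` the adjugate is the inverse, so
`adj(Cᴴ) = C` and the entry is `C i 3 = ψ i (p 3)`.
-/

namespace Matrix

variable {n R : Type*} [Fintype n] [DecidableEq n] [CommRing R] [StarRing R]

theorem adjugate_eq_conjTranspose_of_det_eq_one {A : Matrix n n R} (hA : Aᴴ * A = 1)
    (hdet : A.det = 1) : A.adjugate = Aᴴ :=
  calc A.adjugate = Aᴴ * A * A.adjugate := by rw [hA, Matrix.one_mul]
    _ = Aᴴ := by rw [Matrix.mul_assoc, mul_adjugate, hdet, one_smul, Matrix.mul_one]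

theorem submatrix_id_mul_conjTranspose_eq_one {A : Matrix n n R} (hA : A * Aᴴ = 1)
    (σ : Equiv.Perm n) : A.submatrix id σ * (A.submatrix id σ)ᴴ = 1 := by
  rw [conjTranspose_submatrix, submatrix_mul_equiv, hA, submatrix_id_id]

end Matrix

theorem crossG_apply (u v w : Fin 4 → ℂ) (i : Fin 4) :
    crossG u v w i = (Matrix.of ![u, v, w, Pi.single i 1]).det := by
  rw [crossG, Finset.sum_apply, Fintype.sum_eq_single i fun j hj => by simp [hj]]
  simp only [Pi.smul_apply, Pi.single_eq_same, smul_eq_mul, mul_one]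
  exact Matrix.det_transpose _

theorem crossG_rows_eq_adjugate (M : Matrix (Fin 4) (Fin 4) ℂ) (i : Fin 4) :
    crossG (M 0) (M 1) (M 2) i = M.adjugate i 3 := by
  rw [crossG_apply, Matrix.adjugate_apply]
  congr 1
  ext a b
  fin_cases a <;> simp [Matrix.updateRow_apply]

/-- If `ψ` is a unitary `4×4` complex matrix with `det ψ = 1` and `(p 0, p 1, p 2, p 3)`
is an even permutation of `(0,1,2,3)`, then the `p 3`-th column of `ψ` equals the
generalized cross product of the complex conjugates of the `p 0`-th, `p 1`-th and
`p 2`-th columns of `ψ`. -/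
theorem column_eq_crossG_of_unitary (ψ : Matrix (Fin 4) (Fin 4) ℂ)
    (hunit : ψᴴ * ψ = 1) (hdet : ψ.det = 1)
    (p : Equiv.Perm (Fin 4)) (hp : Equiv.Perm.sign p = 1) :
    (fun i => ψ i (p 3)) =
      crossG (fun i => (starRingEnd ℂ) (ψ i (p 0)))
        (fun i => (starRingEnd ℂ) (ψ i (p 1)))
        (fun i => (starRingEnd ℂ) (ψ i (p 2))) := by
  set C := ψ.submatrix id p
  have hC : C * Cᴴ = 1 :=
    Matrix.submatrix_id_mul_conjTranspose_eq_one (mul_eq_one_comm.mp hunit) p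
  have hdetC : Cᴴ.det = 1 := by
    rw [Matrix.det_conjTranspose, Matrix.det_permute', hp, hdet]
    simp
  have hadj : Cᴴ.adjugate = C := by
    have hCH : Cᴴᴴ * Cᴴ = 1 := by rwa [Matrix.conjTranspose_conjTranspose]
    rw [Matrix.adjugate_eq_conjTranspose_of_det_eq_one hCH hdetC, Matrix.conjTranspose_conjTranspose]
  funext i
  change C i 3 = crossG (Cᴴ 0) (Cᴴ 1) (Cᴴ 2) i
  rw [crossG_rows_eq_adjugate, hadj]
end

section
/- Let Q : ℝ² → M₂(ℂ) be twice continuously differentiable in (x,t) with Qᵀ = Q (symmetric). Define the 4×4 matrix-valued functions U = [[0, Q],[−Q†, 0]] (blocks), σ = diag(1,1,−1,−1), and for λ ∈ ℂ set V(λ) = −2iλ²σ + 2λU + iσ(U_x − U²). Then Q satisfies the spin-1 Gross–Pitaevskii equation i·Q_t + Q_{xx} + 2·Q·Q†·Q = 0 on ℝ² if and only if the zero-curvature equation U_t − ∂_x V(λ) + [−iλσ + U, V(λ)] = 0 holds on ℝ² for every λ ∈ ℂ. -/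
open scoped Matrix

/-- Entrywise partial derivative in the first (`x`) variable of a matrix-valued
function on `ℝ²`. -/
noncomputable def matDx {m n : Type*} (F : ℝ × ℝ → Matrix m n ℂ) : ℝ × ℝ → Matrix m n ℂ :=
  fun p => Matrix.of fun i j => fderiv ℝ (fun q => F q i j) p (1, 0)

/-- Entrywise partial derivative in the second (`t`) variable of a matrix-valued
function on `ℝ²`. -/
noncomputable def matDt {m n : Type*} (F : ℝ × ℝ → Matrix m n ℂ) : ℝ × ℝ → Matrix m n ℂ :=
  fun p => Matrix.of fun i j => fderiv ℝ (fun q => F q i j) p (0, 1)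

/-- The potential matrix `U = [[0, Q],[−Q†, 0]]`. -/
noncomputable def Umat (Q : ℝ × ℝ → Matrix (Fin 2) (Fin 2) ℂ) :
    ℝ × ℝ → Matrix (Fin 2 ⊕ Fin 2) (Fin 2 ⊕ Fin 2) ℂ :=
  fun p => Matrix.fromBlocks 0 (Q p) (-(Q p)ᴴ) 0

/-- The matrix `σ = diag(1,1,−1,−1)`. -/
noncomputable def sigma4 : Matrix (Fin 2 ⊕ Fin 2) (Fin 2 ⊕ Fin 2) ℂ :=
  Matrix.fromBlocks 1 0 0 (-1)

/-- The second Lax matrix `V(λ) = −2iλ²σ + 2λU + iσ(U_x − U²)`. -/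
noncomputable def Vmat (Q : ℝ × ℝ → Matrix (Fin 2) (Fin 2) ℂ) (lam : ℂ) :
    ℝ × ℝ → Matrix (Fin 2 ⊕ Fin 2) (Fin 2 ⊕ Fin 2) ℂ :=
  fun p => (-2 * Complex.I * lam ^ 2) • sigma4 + (2 * lam) • Umat Q p +
    Complex.I • (sigma4 * (matDx (Umat Q) p - Umat Q p * Umat Q p))

/-! Since `σ² = 1` and `σ` anticommutes with the off-diagonal matrices `U` and `U_x`, every
power of `λ` cancels in the zero-curvature expression, which collapses to the `λ`-independent
matrix `U_t − iσ(U_xx − 2U³)`. This is again off-diagonal, with upper-right block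
`−i(iQ_t + Q_xx + 2QQ†Q)`, so it vanishes exactly when `Q` solves the Gross–Pitaevskii equation. -/

section MatDeriv

variable {E : Type*} [NormedAddCommGroup E] [NormedSpace ℝ E] {m n l : Type*}

noncomputable def matDeriv (v : E) (F : E → Matrix m n ℂ) : E → Matrix m n ℂ :=
  fun p => Matrix.of fun i j => fderiv ℝ (fun q => F q i j) p v

def EntrywiseDifferentiableAt (F : E → Matrix m n ℂ) (p : E) : Prop :=
  ∀ i j, DifferentiableAt ℝ (fun q => F q i j) p

variable {F G : E → Matrix m n ℂ} {p : E}

theorem entrywiseDifferentiableAt_const (C : Matrix m n ℂ) :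
    EntrywiseDifferentiableAt (fun _ : E => C) p :=
  fun _ _ => differentiableAt_const _

theorem EntrywiseDifferentiableAt.add (hF : EntrywiseDifferentiableAt F p)
    (hG : EntrywiseDifferentiableAt G p) : EntrywiseDifferentiableAt (fun q => F q + G q) p :=
  fun i j => (hF i j).add (hG i j)

theorem EntrywiseDifferentiableAt.sub (hF : EntrywiseDifferentiableAt F p)
    (hG : EntrywiseDifferentiableAt G p) : EntrywiseDifferentiableAt (fun q => F q - G q) p :=
  fun i j => (hF i j).sub (hG i j)

theorem EntrywiseDifferentiableAt.const_smul (hF : EntrywiseDifferentiableAt F p) (c : ℂ) :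
    EntrywiseDifferentiableAt (fun q => c • F q) p :=
  fun i j => (hF i j).const_mul c

theorem EntrywiseDifferentiableAt.mul [Fintype n] {G : E → Matrix n l ℂ}
    (hF : EntrywiseDifferentiableAt F p) (hG : EntrywiseDifferentiableAt G p) :
    EntrywiseDifferentiableAt (fun q => F q * G q) p :=
  fun i j => DifferentiableAt.fun_sum fun k _ => (hF i k).mul (hG k j)

theorem matDeriv_const (v : E) (C : Matrix m n ℂ) : matDeriv v (fun _ => C) p = 0 := by
  ext i j
  simp [matDeriv]

theorem matDeriv_add (v : E) (hF : EntrywiseDifferentiableAt F p)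
    (hG : EntrywiseDifferentiableAt G p) :
    matDeriv v (fun q => F q + G q) p = matDeriv v F p + matDeriv v G p := by
  ext i j
  simp [matDeriv, fderiv_fun_add (hF i j) (hG i j)]

theorem matDeriv_sub (v : E) (hF : EntrywiseDifferentiableAt F p)
    (hG : EntrywiseDifferentiableAt G p) :
    matDeriv v (fun q => F q - G q) p = matDeriv v F p - matDeriv v G p := by
  ext i j
  simp [matDeriv, fderiv_fun_sub (hF i j) (hG i j)]

theorem matDeriv_const_smul (v : E) (hF : EntrywiseDifferentiableAt F p) (c : ℂ) :
    matDeriv v (fun q => c • F q) p = c • matDeriv v F p := by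
  ext i j
  simp [matDeriv, fderiv_const_mul (hF i j) c]

theorem matDeriv_mul [Fintype n] (v : E) {G : E → Matrix n l ℂ}
    (hF : EntrywiseDifferentiableAt F p) (hG : EntrywiseDifferentiableAt G p) :
    matDeriv v (fun q => F q * G q) p = matDeriv v F p * G p + F p * matDeriv v G p := by
  ext i j
  simp only [matDeriv, Matrix.of_apply, Matrix.add_apply, Matrix.mul_apply]
  rw [fderiv_fun_sum fun k _ => (hF i k).fun_mul (hG k j), sum_apply, ← Finset.sum_add_distrib]
  refine Finset.sum_congr rfl fun k _ => ?_
  rw [fderiv_fun_mul (hF i k) (hG k j)]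
  simp only [add_apply, smul_apply, smul_eq_mul]
  ring

end MatDeriv

open Matrix

theorem entrywiseDifferentiableAt_matDx {m n : Type*} {Q : ℝ × ℝ → Matrix m n ℂ}
    (hQ : ∀ i j, ContDiff ℝ 2 fun p => Q p i j) (p : ℝ × ℝ) :
    EntrywiseDifferentiableAt (matDx Q) p := fun i j =>
  ((((hQ i j).fderiv_right (m := 1) le_rfl).clm_apply contDiff_const).differentiable
    one_ne_zero) p

theorem zeroCurvature_eq_of_anticommute {A : Type*} [Ring A] [Algebra ℂ A] (s u ux uxx ut : A)
    (hss : s * s = 1) (hus : u * s = -(s * u)) (huxs : ux * s = -(s * ux)) (lam : ℂ) :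
    ut - ((2 * lam) • ux + Complex.I • (s * (uxx - (ux * u + u * ux)))) +
      ((((-Complex.I * lam) • s + u) *
          ((-2 * Complex.I * lam ^ 2) • s + (2 * lam) • u + Complex.I • (s * (ux - u * u))) -
        ((-2 * Complex.I * lam ^ 2) • s + (2 * lam) • u + Complex.I • (s * (ux - u * u))) *
          ((-Complex.I * lam) • s + u))) =
    ut - Complex.I • (s * (uxx - (2 : ℂ) • (u * (u * u)))) := by
  have hu : ∀ X : A, u * (s * X) = -(s * (u * X)) := fun X => by
    rw [← mul_assoc, hus, neg_mul, mul_assoc]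
  have hs : ∀ X : A, s * (s * X) = X := fun X => by
    rw [← mul_assoc, hss, one_mul]
  simp only [mul_add, add_mul, mul_sub, sub_mul, smul_mul_assoc, mul_smul_comm, smul_smul,
    mul_assoc, hss, hus, huxs, hu, hs, smul_add, smul_sub, smul_neg, neg_mul, mul_neg, neg_neg]
  match_scalars <;> ring_nf; simp [Complex.I_sq]

def skewOffDiag {m n : Type*} (A : Matrix m n ℂ) : Matrix (m ⊕ n) (m ⊕ n) ℂ :=
  fromBlocks 0 A (-Aᴴ) 0

theorem skewOffDiag_eq_zero_iff {m n : Type*} {A : Matrix m n ℂ} :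
    skewOffDiag A = 0 ↔ A = 0 := by
  refine ⟨fun h => ?_, fun h => by simp [h, skewOffDiag, ← fromBlocks_zero]⟩
  ext i j
  simpa [skewOffDiag] using congrFun₂ h (Sum.inl i) (Sum.inr j)

theorem skewOffDiag_cube {m n : Type*} [Fintype m] [Fintype n] (A : Matrix m n ℂ) :
    skewOffDiag A * (skewOffDiag A * skewOffDiag A) = skewOffDiag (-(A * Aᴴ * A)) := by
  simp [skewOffDiag, fromBlocks_multiply, Matrix.mul_assoc]

theorem sigma4_mul_self : sigma4 * sigma4 = 1 := by
  simp [sigma4, fromBlocks_multiply, ← fromBlocks_one]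

theorem skewOffDiag_mul_sigma4 (A : Matrix (Fin 2) (Fin 2) ℂ) :
    skewOffDiag A * sigma4 = -(sigma4 * skewOffDiag A) := by
  simp [skewOffDiag, sigma4, fromBlocks_multiply, fromBlocks_neg]

theorem skewOffDiag_sub_I_smul_sigma4_mul (a b q : Matrix (Fin 2) (Fin 2) ℂ) :
    skewOffDiag a - Complex.I • (sigma4 * (skewOffDiag b -
        (2 : ℂ) • (skewOffDiag q * (skewOffDiag q * skewOffDiag q)))) =
      skewOffDiag (-Complex.I • (Complex.I • a + b + (2 : ℂ) • (q * qᴴ * q))) := by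
  rw [skewOffDiag_cube]
  simp only [skewOffDiag, sigma4, sub_eq_add_neg, fromBlocks_smul, fromBlocks_neg, fromBlocks_add,
    fromBlocks_multiply]
  congr 1 <;> simp [smul_smul] <;> abel

theorem matDeriv_Umat (v : ℝ × ℝ) (R : ℝ × ℝ → Matrix (Fin 2) (Fin 2) ℂ) :
    matDeriv v (Umat R) = Umat (matDeriv v R) := by
  funext p
  ext (i | i) (j | j) <;>
    simp [matDeriv, Umat, fderiv_fun_neg, -Complex.star_def, -RCLike.star_def]

theorem EntrywiseDifferentiableAt.Umat {R : ℝ × ℝ → Matrix (Fin 2) (Fin 2) ℂ} {p : ℝ × ℝ}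
    (hR : EntrywiseDifferentiableAt R p) : EntrywiseDifferentiableAt (Umat R) p := by
  rintro (i | i) (j | j) <;> simp [_root_.Umat, hR _ _, -Complex.star_def, -RCLike.star_def]

theorem matDx_Vmat (Q : ℝ × ℝ → Matrix (Fin 2) (Fin 2) ℂ) (lam : ℂ) {p : ℝ × ℝ}
    (hQ : EntrywiseDifferentiableAt Q p) (hQx : EntrywiseDifferentiableAt (matDx Q) p) :
    matDx (Vmat Q lam) p = (2 * lam) • Umat (matDx Q) p +
      Complex.I • (sigma4 * (Umat (matDx (matDx Q)) p -
        (Umat (matDx Q) p * Umat Q p + Umat Q p * Umat (matDx Q) p))) := by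
  have hU := hQ.Umat
  have hUx := hQx.Umat
  have hσ := entrywiseDifferentiableAt_const (p := p) sigma4
  have hUU := hU.mul hU
  have hW := hUx.sub hUU
  show matDeriv (1, 0) (fun q => (-2 * Complex.I * lam ^ 2) • sigma4 + (2 * lam) • Umat Q q +
    Complex.I • (sigma4 * (matDx (Umat Q) q - Umat Q q * Umat Q q))) p = _
  rw [show matDx (Umat Q) = Umat (matDx Q) from matDeriv_Umat (1, 0) Q,
    matDeriv_add _ ((entrywiseDifferentiableAt_const _).add (hU.const_smul _))
      ((hσ.mul hW).const_smul _),
    matDeriv_add _ (entrywiseDifferentiableAt_const _) (hU.const_smul _),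
    matDeriv_const, matDeriv_const_smul _ hU, matDeriv_const_smul _ (hσ.mul hW),
    matDeriv_mul _ hσ hW, matDeriv_const, matDeriv_sub _ hUx hUU, matDeriv_mul _ hU hU,
    matDeriv_Umat, matDeriv_Umat, zero_add, zero_mul, zero_add]
  rfl

theorem zeroCurvature_eq_skewOffDiag (Q : ℝ × ℝ → Matrix (Fin 2) (Fin 2) ℂ) (lam : ℂ)
    {p : ℝ × ℝ} (hQ : EntrywiseDifferentiableAt Q p)
    (hQx : EntrywiseDifferentiableAt (matDx Q) p) :
    matDt (Umat Q) p - matDx (Vmat Q lam) p +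
        (((-Complex.I * lam) • sigma4 + Umat Q p) * Vmat Q lam p -
          Vmat Q lam p * ((-Complex.I * lam) • sigma4 + Umat Q p)) =
      skewOffDiag (-Complex.I • (Complex.I • matDt Q p + matDx (matDx Q) p +
        (2 : ℂ) • (Q p * (Q p)ᴴ * Q p))) := by
  have hUt : matDt (Umat Q) = Umat (matDt Q) := matDeriv_Umat (0, 1) Q
  have hUx : matDx (Umat Q) = Umat (matDx Q) := matDeriv_Umat (1, 0) Q
  rw [hUt, matDx_Vmat Q lam hQ hQx, Vmat, hUx]
  exact (zeroCurvature_eq_of_anticommute _ _ _ _ _ sigma4_mul_self (skewOffDiag_mul_sigma4 (Q p))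
    (skewOffDiag_mul_sigma4 (matDx Q p)) lam).trans (skewOffDiag_sub_I_smul_sigma4_mul _ _ _)

theorem spin1GP_iff_zero_curvature_general (Q : ℝ × ℝ → Matrix (Fin 2) (Fin 2) ℂ)
    (hC2 : ∀ i j, ContDiff ℝ 2 fun p => Q p i j) :
    (∀ p : ℝ × ℝ,
        Complex.I • matDt Q p + matDx (matDx Q) p + (2 : ℂ) • (Q p * (Q p)ᴴ * Q p) = 0) ↔
    (∀ (lam : ℂ) (p : ℝ × ℝ),
        matDt (Umat Q) p - matDx (Vmat Q lam) p +
          (((-Complex.I * lam) • sigma4 + Umat Q p) * Vmat Q lam p -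
            Vmat Q lam p * ((-Complex.I * lam) • sigma4 + Umat Q p)) = 0) := by
  have hQ : ∀ p, EntrywiseDifferentiableAt Q p := fun p i j =>
    (hC2 i j).differentiable two_ne_zero p
  have key := fun lam p => zeroCurvature_eq_skewOffDiag Q lam (hQ p)
    (entrywiseDifferentiableAt_matDx hC2 p)
  simp only [key, skewOffDiag_eq_zero_iff, smul_eq_zero, neg_eq_zero, Complex.I_ne_zero, false_or]
  exact ⟨fun h _ => h, fun h => h 0⟩

/-- For a symmetric, twice continuously differentiable `Q : ℝ² → M₂(ℂ)`, the spin-1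
Gross–Pitaevskii equation `i Q_t + Q_xx + 2 Q Q† Q = 0` holds on `ℝ²` if and only if
the zero-curvature equation `U_t − ∂ₓV(λ) + [−iλσ + U, V(λ)] = 0` holds on `ℝ²` for
every `λ ∈ ℂ`. -/
theorem spin1GP_iff_zero_curvature (Q : ℝ × ℝ → Matrix (Fin 2) (Fin 2) ℂ)
    (hC2 : ∀ i j, ContDiff ℝ 2 fun p => Q p i j)
    (hsym : ∀ p, (Q p)ᵀ = Q p) :
    (∀ p : ℝ × ℝ,
        Complex.I • matDt Q p + matDx (matDx Q) p + (2 : ℂ) • (Q p * (Q p)ᴴ * Q p) = 0) ↔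
    (∀ (lam : ℂ) (p : ℝ × ℝ),
        matDt (Umat Q) p - matDx (Vmat Q lam) p +
          (((-Complex.I * lam) • sigma4 + Umat Q p) * Vmat Q lam p -
            Vmat Q lam p * ((-Complex.I * lam) • sigma4 + Umat Q p)) = 0) :=
  spin1GP_iff_zero_curvature_general Q hC2
end

section
/- Let N ≥ 1, m₁,…,m_N ∈ ℕ, and for each j let g_{j,0},…,g_{j,m_j} be symmetric 2×2 complex matrices. Let Â be the block-diagonal complex matrix of size 𝒩 = 2·Σ_{j=1}^N (m_j+1) whose j-th diagonal block is the (m_j+1)×(m_j+1) block matrix (of 2×2 blocks) with (r,s)-block equal to (g_{j,r−s})† when s ≤ r and to 0 when s > r. Let Γ be the block-diagonal matrix diag(Γ₁⊗I₂,…,Γ_N⊗I₂), where Γ_j is the (m_j+1)×(m_j+1) matrix with ones on the antidiagonal and zeros elsewhere. Then Γ·Â = Âᵀ·Γ and Γ·conj(Â) = Â†·Γ. -/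
open scoped Matrix

/-- The block-diagonal, block-lower-triangular matrix `Â` whose `j`-th diagonal block has
`(r,s)` (zero-based) `2×2` block equal to `(g_{j,r−s})†` for `s ≤ r` and `0` otherwise. -/
noncomputable def AhatMat (N : ℕ) (m : Fin N → ℕ)
    (g : (j : Fin N) → ℕ → Matrix (Fin 2) (Fin 2) ℂ) :
    Matrix ((j : Fin N) × (Fin (m j + 1) × Fin 2)) ((j : Fin N) × (Fin (m j + 1) × Fin 2)) ℂ :=
  Matrix.of fun p q =>
    if p.1 = q.1 ∧ (q.2.1 : ℕ) ≤ (p.2.1 : ℕ) then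
      ((g p.1 ((p.2.1 : ℕ) - (q.2.1 : ℕ)))ᴴ) p.2.2 q.2.2
    else 0

/-- The block-diagonal matrix `Γ = diag(Γ₁⊗I₂,…,Γ_N⊗I₂)`, where `Γ_j` is the
`(m_j+1)×(m_j+1)` antidiagonal permutation matrix. -/
noncomputable def GamMat (N : ℕ) (m : Fin N → ℕ) :
    Matrix ((j : Fin N) × (Fin (m j + 1) × Fin 2)) ((j : Fin N) × (Fin (m j + 1) × Fin 2)) ℂ :=
  Matrix.of fun p q =>
    if p.1 = q.1 ∧ (p.2.1 : ℕ) + (q.2.1 : ℕ) = m p.1 ∧ p.2.2 = q.2.2 then 1 else 0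

/-! Γ is the permutation matrix of the involution `σ : (j, r, i) ↦ (j, m_j − r, i)`, so
`Γ·Â = Âᵀ·Γ` says `Â(σp, q) = Â(σq, p)`. Within block `j` both entries are the `2×2`-block
`(g_{j, m_j − r − s})†` read at transposed positions, which agree because `g_{j, m_j − r − s}` is
symmetric. Since Γ is real, conjugating the first identity gives the second. -/

namespace Matrix

variable {n α : Type*}

theorem toPEquiv_toMatrix_mul_eq_transpose_mul [Fintype n] [DecidableEq n] [NonAssocSemiring α]
    (σ : Equiv.Perm n) (A : Matrix n n α) (hA : ∀ p q, A (σ p) q = A (σ.symm q) p) :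
    σ.toPEquiv.toMatrix * A = Aᵀ * σ.toPEquiv.toMatrix := by
  rw [PEquiv.toMatrix_toPEquiv_mul, PEquiv.mul_toMatrix_toPEquiv]
  ext p q
  exact hA p q

theorem map_starRingEnd_toPEquiv_toMatrix [DecidableEq n] [CommSemiring α] [StarRing α]
    (σ : Equiv.Perm n) :
    (σ.toPEquiv.toMatrix : Matrix n n α).map (starRingEnd α) = σ.toPEquiv.toMatrix := by
  ext p q
  simp only [map_apply, PEquiv.toMatrix_apply]
  split_ifs <;> simp

theorem mul_map_starRingEnd_eq_conjTranspose_mul [Fintype n] [CommSemiring α] [StarRing α]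
    {G A : Matrix n n α} (hG : G.map (starRingEnd α) = G) (h : G * A = Aᵀ * G) :
    G * A.map (starRingEnd α) = Aᴴ * G := by
  calc G * A.map (starRingEnd α) = (G * A).map (starRingEnd α) := by rw [Matrix.map_mul, hG]
    _ = (Aᵀ * G).map (starRingEnd α) := by rw [h]
    _ = Aᴴ * G := by rw [Matrix.map_mul, hG]; rfl

end Matrix

def revBlocks (N : ℕ) (m : Fin N → ℕ) : Equiv.Perm ((j : Fin N) × (Fin (m j + 1) × Fin 2)) :=
  Equiv.sigmaCongrRight fun _ => Equiv.prodCongr Fin.revPerm (Equiv.refl _)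

@[simp]
theorem revBlocks_apply (N : ℕ) (m : Fin N → ℕ) (p : (j : Fin N) × (Fin (m j + 1) × Fin 2)) :
    revBlocks N m p = ⟨p.1, (p.2.1.rev, p.2.2)⟩ := rfl

@[simp]
theorem revBlocks_symm (N : ℕ) (m : Fin N → ℕ) : (revBlocks N m).symm = revBlocks N m := by
  ext p <;> simp [revBlocks]

theorem GamMat_eq_toPEquiv_toMatrix (N : ℕ) (m : Fin N → ℕ) :
    GamMat N m = (revBlocks N m).toPEquiv.toMatrix := by
  ext ⟨j, a, s⟩ ⟨j', b, t⟩
  simp only [GamMat, Matrix.of_apply, PEquiv.toMatrix_apply, Equiv.toPEquiv_apply,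
    Option.mem_some_iff, revBlocks_apply]
  congr 1
  rcases eq_or_ne j j' with rfl | hj
  · have := a.isLt
    simp only [Sigma.mk.inj_iff, heq_eq_eq, Prod.mk.injEq, Fin.ext_iff, Fin.val_rev, true_and]
    apply propext
    omega
  · simp [hj]

theorem AhatMat_revBlocks_apply (N : ℕ) (m : Fin N → ℕ)
    (g : (j : Fin N) → ℕ → Matrix (Fin 2) (Fin 2) ℂ) (hg : ∀ j n, n ≤ m j → (g j n).IsSymm)
    (p q : (j : Fin N) × (Fin (m j + 1) × Fin 2)) :
    AhatMat N m g (revBlocks N m p) q = AhatMat N m g (revBlocks N m q) p := by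
  obtain ⟨j, a, s⟩ := p
  obtain ⟨j', b, t⟩ := q
  simp only [AhatMat, Matrix.of_apply, revBlocks_apply, Fin.val_rev]
  rcases eq_or_ne j j' with rfl | hj
  · have := a.isLt
    have := b.isLt
    by_cases hab : (a : ℕ) + b ≤ m j
    · rw [if_pos ⟨rfl, by omega⟩, if_pos ⟨rfl, by omega⟩,
        show m j + 1 - (b + 1) - a = m j + 1 - (a + 1) - b by omega]
      exact ((hg j _ (by omega)).conjTranspose.apply s t).symm
    · rw [if_neg (by omega), if_neg (by omega)]
  · simp [hj, hj.symm]

theorem gamma_Ahat_symmetry_general (N : ℕ) (m : Fin N → ℕ)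
    (g : (j : Fin N) → ℕ → Matrix (Fin 2) (Fin 2) ℂ)
    (hg : ∀ j n, n ≤ m j → (g j n)ᵀ = g j n) :
    GamMat N m * AhatMat N m g = (AhatMat N m g)ᵀ * GamMat N m ∧
    GamMat N m * (AhatMat N m g).map (starRingEnd ℂ) = (AhatMat N m g)ᴴ * GamMat N m := by
  have hGA : GamMat N m * AhatMat N m g = (AhatMat N m g)ᵀ * GamMat N m := by
    rw [GamMat_eq_toPEquiv_toMatrix]
    refine Matrix.toPEquiv_toMatrix_mul_eq_transpose_mul _ _ fun p q => ?_
    rw [revBlocks_symm]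
    exact AhatMat_revBlocks_apply N m g hg p q
  refine ⟨hGA, Matrix.mul_map_starRingEnd_eq_conjTranspose_mul ?_ hGA⟩
  rw [GamMat_eq_toPEquiv_toMatrix]
  exact Matrix.map_starRingEnd_toPEquiv_toMatrix _

/-- If each `g_{j,n}` (`0 ≤ n ≤ m_j`) is a symmetric `2×2` complex matrix, then
`Γ·Â = Âᵀ·Γ` and `Γ·conj(Â) = Â†·Γ`. -/
theorem gamma_Ahat_symmetry (N : ℕ) (hN : 1 ≤ N) (m : Fin N → ℕ)
    (g : (j : Fin N) → ℕ → Matrix (Fin 2) (Fin 2) ℂ)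
    (hg : ∀ j n, n ≤ m j → (g j n)ᵀ = g j n) :
    GamMat N m * AhatMat N m g = (AhatMat N m g)ᵀ * GamMat N m ∧
    GamMat N m * (AhatMat N m g).map (starRingEnd ℂ) = (AhatMat N m g)ᴴ * GamMat N m :=
  gamma_Ahat_symmetry_general N m g hg
end
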